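/- arXiv:2410.00146 — 4 statements merged into one kernel-verified Lean document; each statement's English description precedes it below -/
import Mathlib

section
/- Let S be a subsemigroup of End(X) admitting at least one bijective S-action homomorphism X → S. Then the set of such bijective S-action homomorphisms, with group structure f * g := f ∘ e⁻¹ ∘ g for a fixed one e, is isomorphic to the group of invertible elements of the centralizer of S in End(X). -/
/-- Unrepresentations of a transformation semigroup S ⊆ End(X): bijective
S-action homomorphisms X → S. -/
def Unrep {X : Type*} (S : Set (X → X)) : Type _ :=
  {φ : X ≃ S // ∀ f ∈ S, ∀ x, ((φ (f x) : X → X)) = f ∘ (φ x : X → X)}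

/-- Invertible elements of the centralizer of S in End(X). -/
def CentUnit {X : Type*} (S : Set (X → X)) : Type _ :=
  {ψ : X → X // Function.Bijective ψ ∧ ∀ f ∈ S, ψ ∘ f = f ∘ ψ}

/-! Fix an unrepresentation `e`. Since `e` and any other unrepresentation `φ` both intertwine
the action of `S` on `X` with left composition on `S`, the bijection `e⁻¹ ∘ φ` of `X` commutes
with `S`; conversely `e ∘ ψ` is an unrepresentation for every such bijection `ψ`. Under
`φ ↦ e⁻¹ ∘ φ` the product `φ ∘ e⁻¹ ∘ χ` becomes `(e⁻¹ ∘ φ) ∘ (e⁻¹ ∘ χ)`. -/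

namespace Unrep

variable {X : Type*} {S : Set (X → X)}

lemma symm_comp_commute (e φ : Unrep S) {f : X → X} (hf : f ∈ S) :
    (e.1.symm ∘ φ.1) ∘ f = f ∘ (e.1.symm ∘ φ.1) := by
  funext x
  apply e.1.injective
  apply Subtype.ext
  simp only [Function.comp_apply, Equiv.apply_symm_apply, φ.2 f hf x, e.2 f hf]

def toCentUnit (e φ : Unrep S) : CentUnit S :=
  ⟨e.1.symm ∘ φ.1, (φ.1.trans e.1.symm).bijective, fun _ hf => e.symm_comp_commute φ hf⟩

noncomputable def ofCentUnit (e : Unrep S) (ψ : CentUnit S) : Unrep S :=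
  ⟨(Equiv.ofBijective ψ.1 ψ.2.1).trans e.1, fun f hf x =>
    show (e.1 (ψ.1 (f x)) : X → X) = f ∘ e.1 (ψ.1 x) by
      rw [show ψ.1 (f x) = f (ψ.1 x) from congrFun (ψ.2.2 f hf) x, e.2 f hf]⟩

noncomputable def equivCentUnit (e : Unrep S) : Unrep S ≃ CentUnit S where
  toFun := e.toCentUnit
  invFun := e.ofCentUnit
  left_inv φ := Subtype.ext <| Equiv.ext fun x => by simp [toCentUnit, ofCentUnit]
  right_inv ψ := Subtype.ext <| funext fun x => by simp [toCentUnit, ofCentUnit]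

lemma toCentUnit_of_eq_trans (e φ χ ω : Unrep S)
    (hω : ω.1 = (χ.1.trans e.1.symm).trans φ.1) :
    (e.toCentUnit ω).1 = (e.toCentUnit φ).1 ∘ (e.toCentUnit χ).1 := by
  funext x
  simp [toCentUnit, hω]

end Unrep

theorem stmt7_general {X : Type*} (S : Set (X → X))
    (e : Unrep S) :
    ∃ Φ : Unrep S ≃ CentUnit S,
      ∀ f g fg : Unrep S, fg.1 = (g.1.trans e.1.symm).trans f.1 →
        (Φ fg).1 = (Φ f).1 ∘ (Φ g).1 := by
  exact ⟨e.equivCentUnit, fun f g fg hfg => e.toCentUnit_of_eq_trans f g fg hfg⟩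

/-- If S admits at least one unrepresentation e, then the set of
unrepresentations with multiplication f * g := f ∘ e⁻¹ ∘ g is isomorphic to
the group of invertible elements of the centralizer of S in End(X). -/
theorem stmt7 {X : Type*} (S : Set (X → X)) (hS : ∀ f ∈ S, ∀ g ∈ S, f ∘ g ∈ S)
    (e : Unrep S) :
    ∃ Φ : Unrep S ≃ CentUnit S,
      ∀ f g fg : Unrep S, fg.1 = (g.1.trans e.1.symm).trans f.1 →
        (Φ fg).1 = (Φ f).1 ∘ (Φ g).1 :=
  stmt7_general S e
end

section
/- Let X = {1,2,3,4} and S = {f,g,h,j} ⊆ End(X) where f = (1↦1,2↦1,3↦3,4↦3), g = (1↦2,2↦2,3↦3,4↦3), h = (1↦1,2↦1,3↦4,4↦4), j = (1↦2,2↦2,3↦4,4↦4). Then m ∘ n = m for all m,n ∈ S (so S is a left-zero band of transformations), and S has no unrepresentation: there is no bijection φ : X → S with φ(m(x)) = m ∘ φ(x) for all m ∈ S, x ∈ X. -/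
/-!
If `S` is a left-zero band, an equivariant `φ : X → S` satisfies `φ (m x) = m ∘ φ x = m`,
so `φ` is constant on the image of each `m ∈ S`. An injective `φ` therefore forces every
`m ∈ S` to be constant, and `f` is not.
-/

namespace LeftZeroBand

variable {X : Type*} {S : Set (X → X)} {φ : X → X → X}

theorem equivariant_apply_eq (hband : ∀ m ∈ S, ∀ n ∈ S, m ∘ n = m) (hmem : ∀ x, φ x ∈ S)
    (hφ : ∀ m ∈ S, ∀ x, φ (m x) = m ∘ φ x) {m : X → X} (hm : m ∈ S) (x : X) :
    φ (m x) = m :=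
  (hφ m hm x).trans (hband m hm _ (hmem x))

theorem apply_eq_of_injective_equivariant (hband : ∀ m ∈ S, ∀ n ∈ S, m ∘ n = m)
    (hinj : Function.Injective φ) (hmem : ∀ x, φ x ∈ S)
    (hφ : ∀ m ∈ S, ∀ x, φ (m x) = m ∘ φ x) {m : X → X} (hm : m ∈ S) (x y : X) :
    m x = m y :=
  hinj <| (equivariant_apply_eq hband hmem hφ hm x).trans
    (equivariant_apply_eq hband hmem hφ hm y).symm

end LeftZeroBand

/-- The left-zero band S = {f,g,h,j} of transformations of a 4-element set
satisfies m ∘ n = m for all m, n ∈ S, but has no unrepresentation. -/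
theorem stmt10 :
    let f : Fin 4 → Fin 4 := ![0, 0, 2, 2]
    let g : Fin 4 → Fin 4 := ![1, 1, 2, 2]
    let h : Fin 4 → Fin 4 := ![0, 0, 3, 3]
    let j : Fin 4 → Fin 4 := ![1, 1, 3, 3]
    let S : Set (Fin 4 → Fin 4) := {f, g, h, j}
    (∀ m ∈ S, ∀ n ∈ S, m ∘ n = m) ∧
    ¬ ∃ φ : Fin 4 → (Fin 4 → Fin 4), Function.Injective φ ∧ Set.range φ = S ∧
        ∀ m ∈ S, ∀ x, φ (m x) = m ∘ φ x := by
  intro f g h j S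
  have hband : ∀ m ∈ S, ∀ n ∈ S, m ∘ n = m := by
    rintro m (rfl | rfl | rfl | rfl) n (rfl | rfl | rfl | rfl) <;> decide
  refine ⟨hband, ?_⟩
  rintro ⟨φ, hinj, hrange, hφ⟩
  have hmem : ∀ x, φ x ∈ S := fun x => hrange ▸ Set.mem_range_self x
  have hf02 : f 0 = f 2 :=
    LeftZeroBand.apply_eq_of_injective_equivariant hband hinj hmem hφ (Or.inl rfl) 0 2
  exact absurd hf02 (by decide)
end

section
/- A left-zero band S of transformations of X has an unrepresentation if and only if S is the set of all constant functions on X. -/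
/-- A left-zero band of transformations of X has an unrepresentation if and
only if it is the set of all constant functions on X. -/
theorem stmt11 {X : Type*} (S : Set (X → X)) (hlz : ∀ m ∈ S, ∀ n ∈ S, m ∘ n = m) :
    (∃ φ : X → X → X, Function.Injective φ ∧ Set.range φ = S ∧
        ∀ m ∈ S, ∀ x, φ (m x) = m ∘ φ x) ↔
      S = {f : X → X | ∃ a, f = Function.const X a} := by
  constructor
  · rintro ⟨φ, hinj, hrange, hcomm⟩
    have hmem : ∀ x, φ x ∈ S := fun x => hrange ▸ Set.mem_range_self x
    have hkey : ∀ m ∈ S, ∀ x, φ (m x) = m := fun m hm x =>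
      (hcomm m hm x).trans (hlz m hm (φ x) (hmem x))
    have hconst : ∀ m ∈ S, ∀ x y, m x = m y := fun m hm x y =>
      hinj ((hkey m hm x).trans (hkey m hm y).symm)
    ext m
    constructor
    · intro hm
      obtain ⟨x₀, hx₀⟩ : m ∈ Set.range φ := hrange ▸ hm
      refine ⟨m x₀, funext fun y => ?_⟩
      exact hconst m hm y x₀
    · rintro ⟨a, rfl⟩
      have hm : φ a ∈ S := hmem a
      have hb : φ a = Function.const X (φ a a) := funext fun y => hconst _ hm y a
      have : φ (φ a a) = φ a := hkey (φ a) hm a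
      have ha : φ a a = a := hinj this
      rw [← ha, ← hb]
      exact hm
  · intro hS
    refine ⟨fun x => Function.const X x, fun a b h => congrFun h a, ?_, ?_⟩
    · rw [hS]; ext f; simp [Set.range, eq_comm]
    · intro m hm x
      rw [hS] at hm
      obtain ⟨a, rfl⟩ := hm
      rfl
end

section
/- Let S ⊆ End(X) be an inverse semigroup of transformations and φ : X → S an unrepresentation. Then for any f ∈ S and any idempotent e ∈ S with e ≥ f⁻¹∘f (i.e., f ∘ e = f), we have φ⁻¹(f) = f(φ⁻¹(e)). -/
/-- For an unrepresentation φ of an inverse semigroup of transformations S,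
any f ∈ S and idempotent e with f ∘ e = f satisfy φ⁻¹(f) = f(φ⁻¹(e)). -/
theorem stmt16 {X : Type*} (S : Set (X → X)) (hS : ∀ f ∈ S, ∀ g ∈ S, f ∘ g ∈ S)
    (hinv : ∀ f ∈ S, ∃ g ∈ S, f ∘ g ∘ f = f ∧ g ∘ f ∘ g = g ∧
      ∀ g' ∈ S, f ∘ g' ∘ f = f → g' ∘ f ∘ g' = g' → g' = g)
    (φ : X ≃ S) (hhom : ∀ f ∈ S, ∀ x, ((φ (f x) : X → X)) = f ∘ (φ x : X → X))
    (f : X → X) (hf : f ∈ S) (e : X → X) (he : e ∈ S)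
    (hidem : e ∘ e = e) (hfe : f ∘ e = f) :
    φ.symm ⟨f, hf⟩ = f (φ.symm ⟨e, he⟩) := by
  set x := φ.symm ⟨e, he⟩ with hx
  have hφx : (φ x : X → X) = e := by rw [hx, Equiv.apply_symm_apply]
  have h : φ (f x) = ⟨f, hf⟩ := Subtype.ext (by rw [hhom f hf x, hφx, hfe])
  rw [← h, Equiv.symm_apply_apply]
end
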